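/- Let T : A → B be a positive linear map with T* unital (T*(I) = I), ρ ∈ A positive, p = supp ρ and p₀ = supp T(ρ). Then T*(p₀) ≥ p. -/

import Mathlib

/-!
Put `X = T*(1 - p₀)`. The adjoint of a positive map is positive, since
`⟨x, T*(b) x⟩ = tr(T(x x*) b) ≥ 0`; hence `X ≥ 0` and `1 - X = T*(p₀) ≥ 0`. Moreover
`tr(ρ X) = tr(T(ρ)(1 - p₀)) = 0`, which for positive `ρ` and `X` forces `ρ X = 0`. If `r` is the
range projection of `X`, then `ρ (1 - r) = ρ`, so `1 - r ≥ p` by minimality of the support, while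
`r - X = r (1 - X) r ≥ 0`. Adding the two gives `T*(p₀) = 1 - X ≥ p`.
-/

open Matrix ComplexOrder

/-- `p` is the support projection of the positive operator `a`:
the smallest (in the Loewner order) Hermitian idempotent `p` with `a * p = a`. -/
def IsSuppProj {n : Type*} [Fintype n] (a p : Matrix n n ℂ) : Prop :=
  p.IsHermitian ∧ p * p = p ∧ a * p = a ∧
  ∀ q : Matrix n n ℂ, q.IsHermitian → q * q = q → a * q = a → (q - p).PosSemidef

namespace Matrix

variable {n m : Type*} [Fintype n] [Fintype m] {𝕜 : Type*} [RCLike 𝕜]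

theorem posSemidef_of_forall_dotProduct_mulVec_nonneg [DecidableEq n] {M : Matrix n n ℂ}
    (h : ∀ x : n → ℂ, 0 ≤ star x ⬝ᵥ (M *ᵥ x)) : M.PosSemidef := by
  rw [← isPositive_toEuclideanLin_iff, LinearMap.isPositive_iff_complex]
  intro x
  have hx := Complex.nonneg_iff.mp (h x)
  have hreal : star (star x.ofLp ⬝ᵥ M *ᵥ x.ofLp) = star x.ofLp ⬝ᵥ M *ᵥ x.ofLp :=
    Complex.conj_eq_iff_im.mpr hx.2.symm
  simp only [EuclideanSpace.inner_eq_star_dotProduct, toLpLin_apply]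
  rw [dotProduct_star, dotProduct_comm, hreal]
  exact ⟨Complex.conj_eq_iff_re.mp hreal, hx.1⟩

theorem posSemidef_of_isHermitian_of_mul_self_eq {P : Matrix n n 𝕜} (hP : P.IsHermitian)
    (hPP : P * P = P) : P.PosSemidef := by
  simpa only [hP.eq, hPP] using posSemidef_conjTranspose_mul_self P

section MatrixOrder

open scoped MatrixOrder

variable [DecidableEq n]

theorem PosSemidef.trace_mul_nonneg {A B : Matrix n n 𝕜} (hA : A.PosSemidef)
    (hB : B.PosSemidef) : 0 ≤ (A * B).trace := by
  obtain ⟨S, rfl⟩ := CStarAlgebra.nonneg_iff_eq_star_mul_self.mp hB.nonneg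
  rw [← Matrix.mul_assoc, trace_mul_cycle]
  exact (hA.mul_mul_conjTranspose_same S).trace_nonneg

theorem PosSemidef.mul_eq_zero_of_trace_mul_eq_zero {A B : Matrix n n 𝕜} (hA : A.PosSemidef)
    (hB : B.PosSemidef) (h : (A * B).trace = 0) : A * B = 0 := by
  obtain ⟨S, rfl⟩ := CStarAlgebra.nonneg_iff_eq_star_mul_self.mp hA.nonneg
  obtain ⟨R, rfl⟩ := CStarAlgebra.nonneg_iff_eq_star_mul_self.mp hB.nonneg
  rw [star_eq_conjTranspose, star_eq_conjTranspose] at h ⊢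
  have hSR : S * Rᴴ = 0 := by
    rw [← trace_conjTranspose_mul_self_eq_zero_iff, ← h, conjTranspose_mul,
      conjTranspose_conjTranspose, Matrix.mul_assoc, trace_mul_comm R]
    simp only [Matrix.mul_assoc]
  rw [Matrix.mul_assoc, ← Matrix.mul_assoc S, hSR, Matrix.zero_mul, Matrix.mul_zero]

end MatrixOrder

theorem IsHermitian.exists_rangeProjection [DecidableEq n] {X : Matrix n n 𝕜}
    (hX : X.IsHermitian) :
    ∃ r Y : Matrix n n 𝕜, r.IsHermitian ∧ r * r = r ∧ X * r = X ∧ r = X * Y := by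
  -- the spectrum of a matrix is finite, hence discrete
  have hcont (f : ℝ → ℝ) : ContinuousOn f (spectrum ℝ X) := by
    rw [continuousOn_iff_continuous_domRestrict]; fun_prop
  -- `x * x⁻¹` is the indicator of `x ≠ 0`, as `0⁻¹ = 0`
  refine ⟨cfc (fun x : ℝ => x * x⁻¹) X, cfc (fun x : ℝ => x⁻¹) X, cfc_predicate _ X, ?_, ?_, ?_⟩
  · rw [← cfc_mul _ _ X (hcont _) (hcont _)]
    refine cfc_congr fun x _ => ?_
    by_cases hx : x = 0 <;> simp [hx]
  · conv_lhs => enter [1]; rw [← cfc_id' ℝ X hX.isSelfAdjoint]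
    rw [← cfc_mul _ _ X (hcont _) (hcont _)]
    conv_rhs => rw [← cfc_id' ℝ X hX.isSelfAdjoint]
    exact cfc_congr fun x _ => by rw [← mul_assoc, mul_self_mul_inv]
  · conv_rhs => enter [1]; rw [← cfc_id' ℝ X hX.isSelfAdjoint]
    exact cfc_mul _ _ X (hcont _) (hcont _)

theorem posSemidef_apply_of_trace_adjoint [DecidableEq n] [DecidableEq m]
    (T : Matrix n n ℂ →ₗ[ℂ] Matrix m m ℂ) (Tstar : Matrix m m ℂ →ₗ[ℂ] Matrix n n ℂ)
    (hpos : ∀ a : Matrix n n ℂ, a.PosSemidef → (T a).PosSemidef)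
    (hadj : ∀ (a : Matrix n n ℂ) (b : Matrix m m ℂ),
      ((T a)ᴴ * b).trace = (aᴴ * Tstar b).trace)
    {b : Matrix m m ℂ} (hb : b.PosSemidef) : (Tstar b).PosSemidef := by
  refine posSemidef_of_forall_dotProduct_mulVec_nonneg fun x => ?_
  have hx : (vecMulVec x (star x)).PosSemidef := posSemidef_vecMulVec_self_star x
  calc 0 ≤ (T (vecMulVec x (star x)) * b).trace := (hpos _ hx).trace_mul_nonneg hb
    _ = (vecMulVec x (star x) * Tstar b).trace := by
      rw [← (hpos _ hx).1.eq, hadj, hx.1.eq]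
    _ = star x ⬝ᵥ Tstar b *ᵥ x := by
      rw [vecMulVec_mul, trace_vecMulVec, dotProduct_comm, dotProduct_mulVec]

end Matrix

theorem IsSuppProj.posSemidef_one_sub_sub {n : Type*} [Fintype n] [DecidableEq n]
    {ρ p X : Matrix n n ℂ} (hp : IsSuppProj ρ p) (hX : X.IsHermitian)
    (hX1 : (1 - X).PosSemidef) (hρX : ρ * X = 0) : (1 - X - p).PosSemidef := by
  obtain ⟨r, Y, hr, hrr, hXr, hrY⟩ := hX.exists_rangeProjection
  have hrX : r * X = X := by
    simpa only [conjTranspose_mul, hr.eq, hX.eq] using congrArg conjTranspose hXr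
  have hqp : (1 - r - p).PosSemidef := by
    refine hp.2.2.2 (1 - r) (isHermitian_one.sub hr) (IsIdempotentElem.one_sub hrr) ?_
    rw [Matrix.mul_sub, Matrix.mul_one, hrY, ← Matrix.mul_assoc, hρX, Matrix.zero_mul, sub_zero]
  have hrX1 : (r - X).PosSemidef := by
    have := hX1.conjTranspose_mul_mul_same r
    rwa [hr.eq, Matrix.mul_sub, Matrix.mul_one, Matrix.sub_mul, hrr, hrX, hXr] at this
  convert hqp.add hrX1 using 1
  abel

/-- If `T` is positive with unital adjoint `Tstar`, `p = supp ρ`,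
`p₀ = supp T(ρ)`, then `Tstar p₀ ≥ p`. -/
theorem stmt4 {n m : Type*} [Fintype n] [DecidableEq n] [Fintype m] [DecidableEq m]
    (T : Matrix n n ℂ →ₗ[ℂ] Matrix m m ℂ) (Tstar : Matrix m m ℂ →ₗ[ℂ] Matrix n n ℂ)
    (hpos : ∀ a : Matrix n n ℂ, a.PosSemidef → (T a).PosSemidef)
    (hadj : ∀ (a : Matrix n n ℂ) (b : Matrix m m ℂ),
      ((T a)ᴴ * b).trace = (aᴴ * Tstar b).trace)
    (hunital : Tstar 1 = 1)
    (ρ : Matrix n n ℂ) (hρ : ρ.PosSemidef)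
    (p : Matrix n n ℂ) (hp : IsSuppProj ρ p)
    (p₀ : Matrix m m ℂ) (hp₀ : IsSuppProj (T ρ) p₀) :
    (Tstar p₀ - p).PosSemidef := by
  obtain ⟨hp₀h, hp₀i, hTρp₀, -⟩ := hp₀
  have hTstar {b : Matrix m m ℂ} (hb : b.PosSemidef) : (Tstar b).PosSemidef :=
    posSemidef_apply_of_trace_adjoint T Tstar hpos hadj hb
  set X := Tstar (1 - p₀) with hXdef
  have hX : X.PosSemidef := hTstar <| posSemidef_of_isHermitian_of_mul_self_eq
    (isHermitian_one.sub hp₀h) (IsIdempotentElem.one_sub hp₀i)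
  have hX1 : 1 - X = Tstar p₀ := by rw [hXdef, map_sub, hunital, sub_sub_cancel]
  have htr : (ρ * X).trace = 0 := by
    calc (ρ * X).trace = ((T ρ)ᴴ * (1 - p₀)).trace := by rw [hadj, hρ.1.eq]
      _ = 0 := by
        rw [(hpos ρ hρ).1.eq, Matrix.mul_sub, Matrix.mul_one, hTρp₀, sub_self, trace_zero]
  rw [← hX1]
  exact hp.posSemidef_one_sub_sub hX.1
    (hX1 ▸ hTstar (posSemidef_of_isHermitian_of_mul_self_eq hp₀h hp₀i))
    (hρ.mul_eq_zero_of_trace_mul_eq_zero hX htr)
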